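/- Let n = 3k with k odd, F the finite field with 2^n elements, i a positive integer with gcd(i,n) = 1, and f : F → F the Gold function f(x) = x^(2^i+1). Let ξ ∈ F satisfy ξ^8 = ξ, and let μ, ν ∈ F be nonzero. Set Y = { ( x , μ^(−(2^i+1)) · ( ξ·Tr(μx) + Tr(ξ^(2^i)·μx) ) ) : x ∈ F } and Z = { ( ν·(b + b^(2^(n−i))) , ν^(2^i+1)·b ) : b ∈ F }. If Tr( (ξ + ξ^(2^i)) · (μν)^(−2^i) ) = 0, then Y and Z are WZ spaces of f and Y ∩ Z = {(0,0)}. -/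

import Mathlib

noncomputable instance (n : ℕ) : Fintype (GaloisField 2 n) := Fintype.ofFinite _

/-- The absolute trace from `GF(2^n)` to `𝔽₂`. -/
noncomputable def Tr (n : ℕ) : GaloisField 2 n → ZMod 2 :=
  Algebra.trace (ZMod 2) (GaloisField 2 n)

/-- The Walsh transform of `f : GF(2^n) → GF(2^n)` at `(a, b)`. -/
noncomputable def W (n : ℕ) (f : GaloisField 2 n → GaloisField 2 n)
    (a b : GaloisField 2 n) : ℤ :=
  ∑ x : GaloisField 2 n, (-1) ^ (Tr n (a * x + b * f x)).val

/-- A WZ space of `f`: an `𝔽₂`-subspace of `GF(2^n) × GF(2^n)` of dimension `n`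
all of whose nonzero elements are Walsh zeros of `f`. -/
def IsWZSpace (n : ℕ) (f : GaloisField 2 n → GaloisField 2 n)
    (S : Submodule (ZMod 2) (GaloisField 2 n × GaloisField 2 n)) : Prop :=
  Module.finrank (ZMod 2) S = n ∧
    ∀ p ∈ S, p ≠ (0 : GaloisField 2 n × GaloisField 2 n) → W n f p.1 p.2 = 0



section Helpers

variable {n : ℕ}

lemma Tr_add (x y : GaloisField 2 n) : Tr n (x + y) = Tr n x + Tr n y := map_add _ x y
lemma Tr_zero : Tr n (0 : GaloisField 2 n) = 0 := map_zero _
lemma Tr_smul (r : ZMod 2) (x : GaloisField 2 n) :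
    Tr n (algebraMap (ZMod 2) (GaloisField 2 n) r * x) = r * Tr n x := by
  rw [← Algebra.smul_def]; exact map_smul (Algebra.trace (ZMod 2) (GaloisField 2 n)) r x

lemma F_card (hn : n ≠ 0) : Fintype.card (GaloisField 2 n) = 2 ^ n := by
  rw [← Nat.card_eq_fintype_card, GaloisField.card 2 n hn]

lemma F_pow_card (hn : n ≠ 0) (x : GaloisField 2 n) : x ^ 2 ^ n = x := by
  have := FiniteField.pow_card x
  rwa [F_card hn] at this

lemma F_finrank (hn : n ≠ 0) : Module.finrank (ZMod 2) (GaloisField 2 n) = n :=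
  GaloisField.finrank 2 hn

lemma Tr_sq (x : GaloisField 2 n) : Tr n (x ^ 2) = Tr n x := by
  apply (algebraMap (ZMod 2) (GaloisField 2 n)).injective
  rw [show Tr n = ⇑(Algebra.trace (ZMod 2) (GaloisField 2 n)) from rfl]
  rw [trace_eq_sum_automorphisms, trace_eq_sum_automorphisms]
  calc ∑ σ : GaloisField 2 n ≃ₐ[ZMod 2] GaloisField 2 n, σ (x ^ 2)
      = ∑ σ : GaloisField 2 n ≃ₐ[ZMod 2] GaloisField 2 n, (σ x) ^ 2 :=
        Finset.sum_congr rfl fun σ _ => map_pow σ x 2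
    _ = (∑ σ : GaloisField 2 n ≃ₐ[ZMod 2] GaloisField 2 n, σ x) ^ 2 :=
        (sum_pow_char 2 _ _).symm
    _ = ∑ σ : GaloisField 2 n ≃ₐ[ZMod 2] GaloisField 2 n, σ x := by
        rw [← trace_eq_sum_automorphisms, ← map_pow]
        congr 1
        generalize Algebra.trace (ZMod 2) (GaloisField 2 n) x = t
        revert t; decide

lemma Tr_one (hodd : Odd n) : Tr n (1 : GaloisField 2 n) = 1 := by
  have hn : n ≠ 0 := by rintro rfl; simpa using hodd
  have h1 : (1 : GaloisField 2 n) = algebraMap (ZMod 2) _ 1 := by simp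
  rw [show Tr n = ⇑(Algebra.trace (ZMod 2) (GaloisField 2 n)) from rfl, h1,
    Algebra.trace_algebraMap, F_finrank hn]
  obtain ⟨m, rfl⟩ := hodd
  rw [nsmul_eq_mul, mul_one]
  push_cast
  have h2 : (2 : ZMod 2) = 0 := by decide
  rw [h2]
  ring

lemma Tr_exists (hn : n ≠ 0) : ∃ z : GaloisField 2 n, Tr n z = 1 := by
  by_contra h
  push_neg at h
  have := (traceForm_nondegenerate (ZMod 2) (GaloisField 2 n)).1 1 (fun y => ?_)
  · exact one_ne_zero this
  · rw [Algebra.traceForm_apply, one_mul]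
    have h2 : ∀ t : ZMod 2, t ≠ 1 → t = 0 := by decide
    exact h2 _ (h y)

lemma Tr_pow_pow (j : ℕ) (x : GaloisField 2 n) : Tr n (x ^ 2 ^ j) = Tr n x := by
  induction j with
  | zero => simp
  | succ j ih => rw [pow_succ, pow_mul, Tr_sq, ih]

lemma frob_inj (m : ℕ) {a b : GaloisField 2 n} (h : a ^ 2 ^ m = b ^ 2 ^ m) : a = b := by
  have h2 : (a - b) ^ 2 ^ m = 0 := by rw [sub_pow_char_pow, h, sub_self]
  have := pow_eq_zero_iff (pow_ne_zero m two_ne_zero) |>.mp h2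
  exact sub_eq_zero.mp this

lemma fix_pow_mul (z : GaloisField 2 n) (a q : ℕ) (h : z ^ 2 ^ a = z) :
    z ^ 2 ^ (a * q) = z := by
  induction q with
  | zero => simp
  | succ q ih => rw [Nat.mul_succ, pow_add, pow_mul, ih, h]

lemma fix_gcd (z : GaloisField 2 n) : ∀ a b : ℕ, z ^ 2 ^ a = z → z ^ 2 ^ b = z →
    z ^ 2 ^ Nat.gcd a b = z := by
  intro a b
  induction a, b using Nat.gcd.induction with
  | H0 b => intro _ hb; simpa using hb
  | H1 a b ha ih =>
    intro h1 h2
    refine Nat.gcd_rec a b ▸ ih ?_ h1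
    -- show z ^ 2 ^ (b % a) = z
    have hb : b = a * (b / a) + b % a := by
      rw [Nat.add_comm]; exact (Nat.mod_add_div b a).symm
    have key : (z ^ 2 ^ (b % a)) ^ 2 ^ (a * (b / a)) = z ^ 2 ^ b := by
      rw [← pow_mul, ← pow_add, Nat.add_comm, ← hb]
    have key2 : (z ^ 2 ^ (b % a)) ^ 2 ^ (a * (b / a)) = z ^ 2 ^ (a * (b / a)) := by
      rw [key, h2, fix_pow_mul z a _ h1]
    exact frob_inj (a * (b / a)) key2

lemma fix_two (z : GaloisField 2 n) (h : z ^ 2 ^ 1 = z) : z = 0 ∨ z = 1 := by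
  rw [pow_one] at h
  have h0 : z * (z - 1) = 0 := by rw [mul_sub, ← sq, h]; ring
  rcases mul_eq_zero.mp h0 with h' | h'
  · exact Or.inl h'
  · exact Or.inr (sub_eq_zero.mp h')

lemma fix_coprime {a : ℕ} (hn : n ≠ 0) (hgcd : Nat.gcd a n = 1) (z : GaloisField 2 n)
    (h : z ^ 2 ^ a = z) (hz : z ≠ 0) : z = 1 := by
  have := fix_gcd z a n h (F_pow_card hn z)
  rw [hgcd] at this
  rcases fix_two z this with h' | h'
  · exact absurd h' hz
  · exact h'

lemma gold_inj {i : ℕ} (hn : n ≠ 0) (hodd : Odd n) (hgcd : Nat.gcd i n = 1) :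
    Function.Injective fun x : GaloisField 2 n => x ^ (2 ^ i + 1) := by
  have h2i : Nat.gcd (2 * i) n = 1 := by
    have h2 : Nat.Coprime 2 n := by
      refine Nat.prime_two.coprime_iff_not_dvd.mpr ?_
      intro hdvd
      have := Nat.odd_iff.mp hodd
      omega
    exact Nat.Coprime.mul h2 hgcd
  intro x y hxy
  simp only at hxy
  rcases eq_or_ne y 0 with rfl | hy
  · rw [zero_pow (by positivity)] at hxy
    exact pow_eq_zero_iff (by positivity) |>.mp hxy
  rcases eq_or_ne x 0 with rfl | hx
  · rw [zero_pow (by positivity)] at hxy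
    exact ((pow_eq_zero_iff (n := 2 ^ i + 1) (by positivity)).mp hxy.symm).symm
  set z := x * y⁻¹ with hz
  have hz0 : z ≠ 0 := mul_ne_zero hx (inv_ne_zero hy)
  have hz1 : z ^ (2 ^ i + 1) = 1 := by
    rw [hz, mul_pow, inv_pow, hxy, mul_inv_cancel₀ (pow_ne_zero _ hy)]
  have hzi : z ^ 2 ^ i * z = 1 := by rw [← pow_succ, hz1]
  have hfix : z ^ 2 ^ (2 * i) = z := by
    have e1 : z ^ 2 ^ i = z⁻¹ := eq_inv_of_mul_eq_one_left hzi
    have : z ^ 2 ^ (2 * i) = (z ^ 2 ^ i) ^ 2 ^ i := by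
      rw [← pow_mul, ← pow_add, two_mul]
    rw [this, e1, inv_pow, e1, inv_inv]
  have := fix_coprime hn h2i z hfix hz0
  have : x = y := by
    have hxy' : x * y⁻¹ = 1 := this
    field_simp at hxy'
    exact hxy'
  exact this

open scoped Classical


lemma neg_one_val_add (a b : ZMod 2) :
    ((-1 : ℤ)) ^ ((a + b).val) = (-1) ^ a.val * (-1) ^ b.val := by revert a b; decide

lemma char2F : (2 : GaloisField 2 n) = 0 := by
  have := CharP.cast_eq_zero (GaloisField 2 n) 2
  simpa using this

lemma add_self_F (x : GaloisField 2 n) : x + x = 0 := by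
  have : x + x = 2 * x := by ring
  rw [this, char2F, zero_mul]

lemma char2_add_eq_zero {x y : GaloisField 2 n} (h : x + y = 0) : x = y := by
  have : x = -y := eq_neg_of_add_eq_zero_left h
  rw [this, neg_eq_iff_add_eq_zero]
  exact add_self_F y

lemma sum_char (hn : n ≠ 0) (c : GaloisField 2 n) :
    ∑ x : GaloisField 2 n, (-1 : ℤ) ^ (Tr n (c * x)).val
      = if c = 0 then (2 ^ n : ℤ) else 0 := by
  rcases eq_or_ne c 0 with rfl | hc
  · simp only [if_pos rfl, zero_mul, Tr_zero, ZMod.val_zero, pow_zero]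
    rw [Finset.sum_const, Finset.card_univ, F_card hn]
    simp
  · rw [if_neg hc]
    obtain ⟨z, hz⟩ := Tr_exists hn
    have hx₀ : Tr n (c * (c⁻¹ * z)) = 1 := by
      rw [← mul_assoc, mul_inv_cancel₀ hc, one_mul]; exact hz
    set S := ∑ x : GaloisField 2 n, (-1 : ℤ) ^ (Tr n (c * x)).val with hS
    have key : S = -S := by
      nth_rewrite 1 [hS]
      rw [← Equiv.sum_comp (Equiv.addRight (c⁻¹ * z))
        (fun x => (-1 : ℤ) ^ (Tr n (c * x)).val)]
      have : ∀ x : GaloisField 2 n,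
          (-1 : ℤ) ^ (Tr n (c * (Equiv.addRight (c⁻¹ * z) x))).val
            = -((-1 : ℤ) ^ (Tr n (c * x)).val) := by
        intro x
        have e1 : c * (Equiv.addRight (c⁻¹ * z) x) = c * x + c * (c⁻¹ * z) := by
          simp [Equiv.coe_addRight, mul_add]
        rw [e1, Tr_add, hx₀, neg_one_val_add]
        have : ∀ t : ZMod 2, (-1 : ℤ) ^ (1 : ZMod 2).val = -1 := by decide
        rw [this 0]; ring
      rw [Finset.sum_congr rfl fun x _ => this x, ← Finset.sum_neg_distrib]
    linarith


lemma e_mul (z w : GaloisField 2 n) :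
    (-1 : ℤ) ^ (Tr n z).val * (-1 : ℤ) ^ (Tr n w).val = (-1 : ℤ) ^ (Tr n (z + w)).val := by
  rw [Tr_add, neg_one_val_add]

lemma tr_frob_shift (hin : i ≤ n) (hn : n ≠ 0) (d x : GaloisField 2 n) :
    Tr n (d * x ^ 2 ^ i) = Tr n (d ^ 2 ^ (n - i) * x) := by
  have e1 : (d ^ 2 ^ (n - i) * x) ^ 2 ^ i = d * x ^ 2 ^ i := by
    rw [mul_pow, ← pow_mul, ← pow_add, Nat.sub_add_cancel hin, F_pow_card hn]
  rw [← e1, Tr_pow_pow]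

lemma cc_zero_iff {i : ℕ} (hn : n ≠ 0) (hodd : Odd n) (hi : 0 < i) (hin : i ≤ n)
    (hgcd : Nat.gcd i n = 1) (b u₀ : GaloisField 2 n) (hb : b ≠ 0)
    (hu : u₀ ^ (2 ^ i + 1) = b⁻¹) (u : GaloisField 2 n) :
    (b * u) ^ 2 ^ (n - i) + b * u ^ 2 ^ i = 0 ↔ u = 0 ∨ u = u₀ := by
  have hu0 : u₀ ≠ 0 := by
    intro h
    rw [h, zero_pow (by positivity)] at hu
    exact hb (inv_eq_zero.mp hu.symm)
  have hbu : b * u₀ ^ (2 ^ i + 1) = 1 := by rw [hu, mul_inv_cancel₀ hb]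
  constructor
  · intro h
    rcases eq_or_ne u 0 with rfl | hune
    · exact Or.inl rfl
    refine Or.inr ?_
    have heq : (b * u) ^ 2 ^ (n - i) = b * u ^ 2 ^ i := char2_add_eq_zero h
    have star : b * u = (b * u ^ 2 ^ i) ^ 2 ^ i := by
      have h2 : ((b * u) ^ 2 ^ (n - i)) ^ 2 ^ i = (b * u ^ 2 ^ i) ^ 2 ^ i := by rw [heq]
      rwa [← pow_mul, ← pow_add, Nat.sub_add_cancel hin, F_pow_card hn] at h2
    set z := b * u ^ (2 ^ i + 1) with hzdef
    have hz0 : z ≠ 0 := mul_ne_zero hb (pow_ne_zero _ hune)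
    have hzfix : z ^ 2 ^ i = z := by
      have e1 : z ^ 2 ^ i = (b * u ^ 2 ^ i) ^ 2 ^ i * u ^ 2 ^ i := by
        calc z ^ 2 ^ i = (b * (u ^ 2 ^ i * u)) ^ 2 ^ i := by rw [hzdef, ← pow_succ]
          _ = b ^ 2 ^ i * ((u ^ 2 ^ i) ^ 2 ^ i * u ^ 2 ^ i) := by
              rw [mul_pow, mul_pow]
          _ = (b * u ^ 2 ^ i) ^ 2 ^ i * u ^ 2 ^ i := by rw [mul_pow]; ring
      rw [e1, ← star, hzdef]
      rw [show b * u * u ^ 2 ^ i = b * (u ^ 2 ^ i * u) from by ring, ← pow_succ]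
    have hz1 : z = 1 := fix_coprime hn hgcd z hzfix hz0
    have : u ^ (2 ^ i + 1) = b⁻¹ := eq_inv_of_mul_eq_one_right hz1
    exact gold_inj hn hodd hgcd (this.trans hu.symm)
  · rintro (rfl | rfl)
    · rw [mul_zero, zero_pow (by positivity), zero_pow (by positivity), mul_zero, add_zero]
    · have key : b * u = (b * u ^ 2 ^ i) ^ 2 ^ i := by
        apply mul_right_cancel₀ (pow_ne_zero (2 ^ i) hu0)
        calc b * u * u ^ 2 ^ i = b * u ^ (2 ^ i + 1) := by
              rw [pow_succ]; ring
          _ = 1 := hbu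
          _ = (b * u ^ (2 ^ i + 1)) ^ 2 ^ i := by rw [hbu, one_pow]
          _ = b ^ 2 ^ i * ((u ^ 2 ^ i) ^ 2 ^ i * u ^ 2 ^ i) := by
              rw [mul_pow, pow_succ, mul_pow, ← pow_mul]
          _ = (b * u ^ 2 ^ i) ^ 2 ^ i * u ^ 2 ^ i := by rw [mul_pow]; ring
      have heq : (b * u) ^ 2 ^ (n - i) = b * u ^ 2 ^ i := by
        apply frob_inj i
        rw [← pow_mul, ← pow_add, Nat.sub_add_cancel hin, F_pow_card hn, key]
      rw [heq]
      exact add_self_F _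

lemma walsh_b0 (hn : n ≠ 0) (f : GaloisField 2 n → GaloisField 2 n)
    {a : GaloisField 2 n} (ha : a ≠ 0) : W n f a 0 = 0 := by
  unfold W
  rw [Finset.sum_congr rfl fun x _ => by rw [show a * x + 0 * f x = a * x from by ring]]
  rw [sum_char hn a, if_neg ha]

lemma walsh_criterion {i : ℕ} (hn : n ≠ 0) (hodd : Odd n) (hi : 0 < i) (hin : i ≤ n)
    (hgcd : Nat.gcd i n = 1) (f : GaloisField 2 n → GaloisField 2 n)
    (hf : ∀ x, f x = x ^ (2 ^ i + 1)) (a b u₀ : GaloisField 2 n) (hb : b ≠ 0)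
    (hu : u₀ ^ (2 ^ i + 1) = b⁻¹) :
    (W n f a b = 0 ↔ Tr n (a * u₀) = 0) := by
  have hu0 : u₀ ≠ 0 := by
    intro h
    rw [h, zero_pow (by positivity)] at hu
    exact hb (inv_eq_zero.mp hu.symm)
  have hbu : b * u₀ ^ (2 ^ i + 1) = 1 := by rw [hu, mul_inv_cancel₀ hb]
  have hW2 : (W n f a b) ^ 2
      = 2 ^ n - (-1 : ℤ) ^ (Tr n (a * u₀)).val * 2 ^ n := by
    have expand : W n f a b ^ 2 = ∑ x : GaloisField 2 n, ∑ y : GaloisField 2 n,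
        (-1 : ℤ) ^ (Tr n (a * x + b * f x)).val
          * (-1 : ℤ) ^ (Tr n (a * y + b * f y)).val := by
      rw [sq]; unfold W; rw [Finset.sum_mul_sum]
    have step1 : ∀ x : GaloisField 2 n, ∑ y : GaloisField 2 n,
        (-1 : ℤ) ^ (Tr n (a * x + b * f x)).val
          * (-1 : ℤ) ^ (Tr n (a * y + b * f y)).val
        = ∑ u : GaloisField 2 n, (-1 : ℤ) ^ (Tr n (a * u + b * u ^ (2 ^ i + 1))).val
          * (-1 : ℤ) ^ (Tr n (((b * u) ^ 2 ^ (n - i) + b * u ^ 2 ^ i) * x)).val := by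
      intro x
      rw [← Equiv.sum_comp (Equiv.addLeft x) (fun y => (-1 : ℤ) ^ (Tr n (a * x + b * f x)).val
            * (-1 : ℤ) ^ (Tr n (a * y + b * f y)).val)]
      refine Finset.sum_congr rfl fun u _ => ?_
      simp only [Equiv.coe_addLeft]
      rw [hf, hf, e_mul, e_mul]
      have hxu : (x + u) ^ (2 ^ i + 1)
          = x ^ (2 ^ i + 1) + (x ^ 2 ^ i * u + u ^ 2 ^ i * x) + u ^ (2 ^ i + 1) := by
        rw [pow_succ, add_pow_char_pow, pow_succ, pow_succ]
        ring
      have hA : a * x + b * x ^ (2 ^ i + 1) + (a * (x + u) + b * (x + u) ^ (2 ^ i + 1))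
          = (a * u + b * u ^ (2 ^ i + 1)) + (b * (u * x ^ 2 ^ i) + b * (u ^ 2 ^ i * x))
            + 2 * (a * x + b * x ^ (2 ^ i + 1)) := by
        rw [hxu]; ring
      rw [hA, char2F, zero_mul, add_zero]
      have core : Tr n (b * (u * x ^ 2 ^ i)) = Tr n ((b * u) ^ 2 ^ (n - i) * x) := by
        rw [show b * (u * x ^ 2 ^ i) = (b * u) * x ^ 2 ^ i from by ring]
        exact tr_frob_shift hin hn (b * u) x
      have key : Tr n ((a * u + b * u ^ (2 ^ i + 1)) + (b * (u * x ^ 2 ^ i) + b * (u ^ 2 ^ i * x)))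
          = Tr n ((a * u + b * u ^ (2 ^ i + 1)) + ((b * u) ^ 2 ^ (n - i) + b * u ^ 2 ^ i) * x) := by
        rw [Tr_add (a * u + b * u ^ (2 ^ i + 1)) (b * (u * x ^ 2 ^ i) + b * (u ^ 2 ^ i * x)),
          Tr_add (b * (u * x ^ 2 ^ i)) (b * (u ^ 2 ^ i * x)), core,
          show ((b * u) ^ 2 ^ (n - i) + b * u ^ 2 ^ i) * x
            = (b * u) ^ 2 ^ (n - i) * x + b * (u ^ 2 ^ i * x) from by ring,
          Tr_add (a * u + b * u ^ (2 ^ i + 1)) ((b * u) ^ 2 ^ (n - i) * x + b * (u ^ 2 ^ i * x)),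
          Tr_add ((b * u) ^ 2 ^ (n - i) * x) (b * (u ^ 2 ^ i * x))]
      rw [key]
    rw [expand, Finset.sum_congr rfl fun x _ => step1 x, Finset.sum_comm]
    have step2 : ∀ u : GaloisField 2 n,
        ∑ x : GaloisField 2 n, (-1 : ℤ) ^ (Tr n (a * u + b * u ^ (2 ^ i + 1))).val
          * (-1 : ℤ) ^ (Tr n (((b * u) ^ 2 ^ (n - i) + b * u ^ 2 ^ i) * x)).val
        = if (b * u) ^ 2 ^ (n - i) + b * u ^ 2 ^ i = 0
            then (-1 : ℤ) ^ (Tr n (a * u + b * u ^ (2 ^ i + 1))).val * 2 ^ n else 0 := by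
      intro u
      rw [← Finset.mul_sum, sum_char hn]
      split_ifs with h
      · rfl
      · rw [mul_zero]
    rw [Finset.sum_congr rfl fun u _ => step2 u]
    rw [← Finset.sum_filter]
    have hfilter : Finset.univ.filter
          (fun u : GaloisField 2 n => (b * u) ^ 2 ^ (n - i) + b * u ^ 2 ^ i = 0)
        = {0, u₀} := by
      ext u
      simp only [Finset.mem_filter, Finset.mem_univ, true_and, Finset.mem_insert,
        Finset.mem_singleton]
      exact cc_zero_iff hn hodd hi hin hgcd b u₀ hb hu u
    rw [hfilter, Finset.sum_pair (Ne.symm hu0)]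
    have t0 : a * 0 + b * 0 ^ (2 ^ i + 1) = 0 := by
      rw [zero_pow (by positivity)]; ring
    have t1 : a * u₀ + b * u₀ ^ (2 ^ i + 1) = a * u₀ + 1 := by rw [hbu]
    rw [t0, t1, Tr_zero, Tr_add, Tr_one hodd, neg_one_val_add]
    have v0 : ((0 : ZMod 2)).val = 0 := rfl
    have v1 : ((1 : ZMod 2)).val = 1 := rfl
    rw [v0, v1, pow_zero, pow_one, one_mul]
    ring
  constructor
  · intro hW
    rw [hW] at hW2
    have h2 : (0 : ℤ) ^ 2 = 0 := by norm_num
    rw [h2] at hW2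
    rcases (show ∀ t : ZMod 2, t = 0 ∨ t = 1 from by decide) (Tr n (a * u₀)) with h | h
    · exact h
    · rw [h] at hW2
      have : ((1 : ZMod 2)).val = 1 := rfl
      rw [this, pow_one] at hW2
      have h2n : (0 : ℤ) < 2 ^ n := by positivity
      exfalso; linarith
  · intro h
    rw [h] at hW2
    have : ((0 : ZMod 2)).val = 0 := rfl
    rw [this, pow_zero, one_mul, sub_self] at hW2
    exact pow_eq_zero_iff (n := 2) (by norm_num) |>.mp hW2

lemma fix8_pow (η : GaloisField 2 n) (h : η ^ 2 ^ 3 = η) (j : ℕ) :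
    η ^ 2 ^ j = η ^ 2 ^ (j % 3) := by
  conv_lhs => rw [show j = 3 * (j / 3) + j % 3 from by omega]
  rw [pow_add, pow_mul, fix_pow_mul η 3 (j / 3) h]

lemma eta7 (η : GaloisField 2 n) (h8 : η ^ 2 ^ 3 = η) (h0 : η ≠ 0) : η ^ 7 = 1 := by
  have : η ^ 7 * η = 1 * η := by
    rw [one_mul, ← pow_succ]
    norm_num at h8 ⊢
    exact h8
  exact mul_right_cancel₀ h0 this

lemma norm_one {i : ℕ} (hi3 : i % 3 ≠ 0) (η : GaloisField 2 n)
    (h8 : η ^ 2 ^ 3 = η) (h0 : η ≠ 0) :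
    η ^ 2 ^ (2 * i) * η ^ 2 ^ i * η = 1 := by
  have h7 := eta7 η h8 h0
  rcases (show i % 3 = 1 ∨ i % 3 = 2 from by omega) with h | h
  · rw [fix8_pow η h8 i, fix8_pow η h8 (2 * i), h, show (2 * i) % 3 = 2 from by omega]
    rw [show (2:ℕ)^2 = 4 from rfl, show (2:ℕ)^1 = 2 from rfl]
    rw [← pow_add, ← pow_succ, show 4 + 2 + 1 = 7 from rfl, h7]
  · rw [fix8_pow η h8 i, fix8_pow η h8 (2 * i), h, show (2 * i) % 3 = 1 from by omega]
    rw [show (2:ℕ)^2 = 4 from rfl, show (2:ℕ)^1 = 2 from rfl]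
    rw [← pow_add, ← pow_succ, show 2 + 4 + 1 = 7 from rfl, h7]

lemma gold_surj {i : ℕ} (hn : n ≠ 0) (hodd : Odd n) (hgcd : Nat.gcd i n = 1)
    (c : GaloisField 2 n) : ∃ d : GaloisField 2 n, d ^ (2 ^ i + 1) = c :=
  (Finite.injective_iff_surjective.mp (gold_inj hn hodd hgcd)) c

lemma zmod2_cases (t : ZMod 2) : t = 0 ∨ t = 1 := by revert t; decide

lemma zmod2_add_self (t : ZMod 2) : t + t = 0 := by revert t; decide


end Helpers

/-- For `n = 3k` with `k` odd, `gcd(i,n) = 1`, `ξ ∈ F_{2^3}` (i.e. `ξ^8 = ξ`),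
nonzero `μ, ν`, and assuming `Tr((ξ + ξ^(2^i))·(μν)^(−2^i)) = 0`, the sets
`Y = {(x, μ^(−(2^i+1))·(ξ·Tr(μx) + Tr(ξ^(2^i)·μx))) : x ∈ F}` and
`Z = {(ν·(b + b^(1/2^i)), ν^(2^i+1)·b) : b ∈ F}` are WZ spaces of the Gold
function `f(x) = x^(2^i+1)` that intersect trivially. Here `b^(1/2^i) = b^(2^(n−i))`. -/
theorem stmt15 (n i k : ℕ) (hk : Odd k) (hn : n = 3 * k) (hi : 0 < i) (hin : i ≤ n)
    (hgcd : Nat.gcd i n = 1)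
    (f : GaloisField 2 n → GaloisField 2 n) (hf : ∀ x, f x = x ^ (2 ^ i + 1))
    (ξ μ ν : GaloisField 2 n) (hξ : ξ ^ 8 = ξ) (hμ : μ ≠ 0) (hν : ν ≠ 0)
    (htr : Tr n ((ξ + ξ ^ (2 ^ i)) * ((μ * ν) ^ (2 ^ i))⁻¹) = 0) :
    ∃ (Y Z : Submodule (ZMod 2) (GaloisField 2 n × GaloisField 2 n)),
      (Y : Set (GaloisField 2 n × GaloisField 2 n)) =
        Set.range (fun x : GaloisField 2 n =>
          (x, (μ ^ (2 ^ i + 1))⁻¹ *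
            (ξ * algebraMap (ZMod 2) (GaloisField 2 n) (Tr n (μ * x)) +
              algebraMap (ZMod 2) (GaloisField 2 n) (Tr n (ξ ^ (2 ^ i) * μ * x))))) ∧
      (Z : Set (GaloisField 2 n × GaloisField 2 n)) =
        Set.range (fun b : GaloisField 2 n =>
          (ν * (b + b ^ (2 ^ (n - i))), ν ^ (2 ^ i + 1) * b)) ∧
      IsWZSpace n f Y ∧ IsWZSpace n f Z ∧
      ((Y : Set (GaloisField 2 n × GaloisField 2 n)) ∩
          (Z : Set (GaloisField 2 n × GaloisField 2 n)) =
        {((0 : GaloisField 2 n), (0 : GaloisField 2 n))}) := by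
  have hk0 : k ≠ 0 := by rintro rfl; exact absurd (Nat.odd_iff.mp hk) (by decide)
  have hn0 : n ≠ 0 := by omega
  have hodd : Odd n := by rw [hn]; exact (by decide : Odd 3).mul hk
  have hi3 : i % 3 ≠ 0 := by
    intro h
    have h3n : (3 : ℕ) ∣ n := ⟨k, hn⟩
    have h3i : (3 : ℕ) ∣ i := Nat.dvd_of_mod_eq_zero h
    have := Nat.dvd_gcd h3i h3n
    rw [hgcd] at this
    omega
  have hμm : μ ^ (2 ^ i + 1) ≠ 0 := pow_ne_zero _ hμ
  have hνm : ν ^ (2 ^ i + 1) ≠ 0 := pow_ne_zero _ hν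
  have hξ8 : ξ ^ 2 ^ 3 = ξ := by norm_num; exact hξ
  -- the linear maps
  let gY : GaloisField 2 n →+ GaloisField 2 n × GaloisField 2 n :=
    { toFun := fun x => (x, (μ ^ (2 ^ i + 1))⁻¹ *
        (ξ * algebraMap (ZMod 2) (GaloisField 2 n) (Tr n (μ * x)) +
          algebraMap (ZMod 2) (GaloisField 2 n) (Tr n (ξ ^ (2 ^ i) * μ * x))))
      map_zero' := by simp [Tr_zero]
      map_add' := fun x y => by
        have e1 : μ * (x + y) = μ * x + μ * y := by ring
        have e2 : ξ ^ 2 ^ i * μ * (x + y) = ξ ^ 2 ^ i * μ * x + ξ ^ 2 ^ i * μ * y := by ring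
        refine Prod.ext rfl ?_
        simp only [e1, e2, Tr_add, map_add, Prod.snd_add]
        ring }
  let gZ : GaloisField 2 n →+ GaloisField 2 n × GaloisField 2 n :=
    { toFun := fun b => (ν * (b + b ^ (2 ^ (n - i))), ν ^ (2 ^ i + 1) * b)
      map_zero' := by simp [zero_pow (show 2 ^ (n - i) ≠ 0 by positivity)]
      map_add' := fun x y => by
        refine Prod.ext ?_ ?_
        · simp only [add_pow_char_pow, Prod.fst_add]
          ring
        · simp only [Prod.snd_add]
          ring }
  let ℓY := gY.toZModLinearMap 2
  let ℓZ := gZ.toZModLinearMap 2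
  have hℓY : ∀ x, ℓY x = (x, (μ ^ (2 ^ i + 1))⁻¹ *
      (ξ * algebraMap (ZMod 2) (GaloisField 2 n) (Tr n (μ * x)) +
        algebraMap (ZMod 2) (GaloisField 2 n) (Tr n (ξ ^ (2 ^ i) * μ * x)))) := fun _ => rfl
  have hℓZ : ∀ b, ℓZ b = (ν * (b + b ^ (2 ^ (n - i))), ν ^ (2 ^ i + 1) * b) := fun _ => rfl
  refine ⟨LinearMap.range ℓY, LinearMap.range ℓZ, ?_, ?_, ?_, ?_, ?_⟩
  · rw [LinearMap.coe_range]; rfl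
  · rw [LinearMap.coe_range]; rfl
  · -- Y is WZ
    constructor
    · have hinj : Function.Injective ℓY := fun x y hxy => congrArg Prod.fst hxy
      rw [LinearMap.finrank_range_of_inj hinj, F_finrank hn0]
    · intro p hp hpne
      obtain ⟨x, rfl⟩ := LinearMap.mem_range.mp hp
      rw [hℓY x] at hpne ⊢
      set t₁ := Tr n (μ * x) with ht₁def
      set t₂ := Tr n (ξ ^ 2 ^ i * μ * x) with ht₂def
      set η := ξ * algebraMap (ZMod 2) (GaloisField 2 n) t₁
          + algebraMap (ZMod 2) (GaloisField 2 n) t₂ with hηdef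
      by_cases hη : η = 0
      · have hx0 : x ≠ 0 := by
          rintro rfl
          exact hpne (by rw [hη, mul_zero]; exact Prod.ext rfl rfl)
        rw [hη, mul_zero]
        exact walsh_b0 hn0 f hx0
      · have hb : (μ ^ (2 ^ i + 1))⁻¹ * η ≠ 0 := mul_ne_zero (inv_ne_zero hμm) hη
        have hη8 : η ^ 2 ^ 3 = η := by
          rw [hηdef, add_pow_char_pow, mul_pow, ← map_pow, ← map_pow,
            ZMod.pow_card_pow, ZMod.pow_card_pow, hξ8]
        have hnorm := norm_one hi3 η hη8 hη
        have hηinv : η ^ (2 ^ (2 * i) + 2 ^ i) = η⁻¹ := by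
          apply eq_inv_of_mul_eq_one_left
          rw [pow_add]
          exact hnorm
        have hexp : 2 ^ i * (2 ^ i + 1) = 2 ^ (2 * i) + 2 ^ i := by
          rw [Nat.mul_add, Nat.mul_one, ← Nat.pow_add, two_mul]
        have hu : (μ * η ^ 2 ^ i) ^ (2 ^ i + 1) = ((μ ^ (2 ^ i + 1))⁻¹ * η)⁻¹ := by
          rw [mul_inv, inv_inv, mul_pow, ← pow_mul, hexp, hηinv]
        rw [walsh_criterion hn0 hodd hi hin hgcd f hf x ((μ ^ (2 ^ i + 1))⁻¹ * η)
          (μ * η ^ 2 ^ i) hb hu]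
        have hη2i : η ^ 2 ^ i = ξ ^ 2 ^ i * algebraMap (ZMod 2) (GaloisField 2 n) t₁
            + algebraMap (ZMod 2) (GaloisField 2 n) t₂ := by
          rw [hηdef, add_pow_char_pow, mul_pow, ← map_pow, ← map_pow,
            ZMod.pow_card_pow, ZMod.pow_card_pow]
        have harg : x * (μ * η ^ 2 ^ i)
            = algebraMap (ZMod 2) (GaloisField 2 n) t₁ * (ξ ^ 2 ^ i * μ * x)
              + algebraMap (ZMod 2) (GaloisField 2 n) t₂ * (μ * x) := by
          rw [hη2i]; ring
        rw [harg, Tr_add, Tr_smul, Tr_smul, ← ht₁def, ← ht₂def, mul_comm t₂ t₁]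
        exact zmod2_add_self _
  · -- Z is WZ
    constructor
    · have hinj : Function.Injective ℓZ := by
        intro x y hxy
        have h2 := congrArg Prod.snd hxy
        simp only [hℓZ] at h2
        exact mul_left_cancel₀ hνm h2
      rw [LinearMap.finrank_range_of_inj hinj, F_finrank hn0]
    · intro p hp hpne
      obtain ⟨c, rfl⟩ := LinearMap.mem_range.mp hp
      rw [hℓZ c] at hpne ⊢
      have hc : c ≠ 0 := by
        rintro rfl
        exact hpne (by
          rw [zero_pow (show 2 ^ (n - i) ≠ 0 by positivity)]
          norm_num)
      have hB : ν ^ (2 ^ i + 1) * c ≠ 0 := mul_ne_zero hνm hc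
      obtain ⟨d, hd⟩ := gold_surj hn0 hodd hgcd c
      have hd0 : d ≠ 0 := by
        rintro rfl
        rw [zero_pow (by positivity)] at hd
        exact hc hd.symm
      have hu : ((ν * d)⁻¹) ^ (2 ^ i + 1) = (ν ^ (2 ^ i + 1) * c)⁻¹ := by
        rw [inv_pow, mul_pow, hd]
      rw [walsh_criterion hn0 hodd hi hin hgcd f hf _ _ _ hB hu]
      have e1 : ν * (c + c ^ 2 ^ (n - i)) * (ν * d)⁻¹
          = c * d⁻¹ + c ^ 2 ^ (n - i) * d⁻¹ := by
        field_simp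
      have e2 : c * d⁻¹ = d ^ 2 ^ i := by
        rw [← hd, pow_succ, mul_assoc, mul_inv_cancel₀ hd0, mul_one]
      have e3 : c ^ 2 ^ (n - i) * d⁻¹ = d ^ 2 ^ (n - i) := by
        rw [← hd, ← pow_mul,
          show (2 ^ i + 1) * 2 ^ (n - i) = 2 ^ n + 2 ^ (n - i) from by
            rw [Nat.add_mul, Nat.one_mul, ← Nat.pow_add, Nat.add_sub_cancel' hin],
          pow_add, F_pow_card hn0, mul_comm d (d ^ 2 ^ (n - i)), mul_assoc,
          mul_inv_cancel₀ hd0, mul_one]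
      rw [e1, Tr_add, e2, e3, Tr_pow_pow, Tr_pow_pow]
      exact zmod2_add_self _
  · -- trivial intersection
    ext p
    simp only [Set.mem_inter_iff, SetLike.mem_coe, LinearMap.mem_range,
      Set.mem_singleton_iff]
    constructor
    · rintro ⟨⟨x, rfl⟩, ⟨c, hc⟩⟩
      rw [hℓY x]
      rw [hℓY x, hℓZ c] at hc
      have hc1 : ν * (c + c ^ 2 ^ (n - i)) = x := congrArg Prod.fst hc
      have hc2 : ν ^ (2 ^ i + 1) * c = (μ ^ (2 ^ i + 1))⁻¹ *
          (ξ * algebraMap (ZMod 2) (GaloisField 2 n) (Tr n (μ * x)) +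
            algebraMap (ZMod 2) (GaloisField 2 n) (Tr n (ξ ^ 2 ^ i * μ * x))) :=
        congrArg Prod.snd hc
      set t₁ := Tr n (μ * x) with ht₁def
      set t₂ := Tr n (ξ ^ 2 ^ i * μ * x) with ht₂def
      set η := ξ * algebraMap (ZMod 2) (GaloisField 2 n) t₁
          + algebraMap (ZMod 2) (GaloisField 2 n) t₂ with hηdef
      set w := μ * ν with hwdef
      have hw : w ≠ 0 := mul_ne_zero hμ hν
      have hwm : w ^ (2 ^ i + 1) ≠ 0 := pow_ne_zero _ hw
      have hη0 : η = 0 := by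
        by_contra hη
        -- express c in terms of η
        have hc' : c = (w ^ (2 ^ i + 1))⁻¹ * η := by
          have step : c = (ν ^ (2 ^ i + 1))⁻¹ * ((μ ^ (2 ^ i + 1))⁻¹ * η) := by
            rw [← hc2, ← mul_assoc, inv_mul_cancel₀ hνm, one_mul]
          rw [step, hwdef, mul_pow, mul_inv]
          ring
        -- auxiliary identities
        have hwc : w * c = (w ^ 2 ^ i)⁻¹ * η := by
          rw [hc', ← mul_assoc, pow_succ, mul_inv, ← mul_assoc, mul_comm w (w ^ 2 ^ i)⁻¹,
            mul_assoc (w ^ 2 ^ i)⁻¹ w w⁻¹, mul_inv_cancel₀ hw, mul_one]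
        have hwc2 : w ^ 2 ^ i * c = w⁻¹ * η := by
          rw [hc', ← mul_assoc, pow_succ, mul_inv, ← mul_assoc,
            mul_inv_cancel₀ (pow_ne_zero _ hw), one_mul]
        have hccfrob : (c ^ 2 ^ (n - i)) ^ 2 ^ i = c := by
          rw [← pow_mul, ← pow_add, Nat.sub_add_cancel hin, F_pow_card hn0]
        have key2 : Tr n (w * c ^ 2 ^ (n - i)) = Tr n ((w ^ 2 ^ i)⁻¹ * η ^ 2 ^ i) := by
          rw [← Tr_pow_pow i (w * c ^ 2 ^ (n - i)), mul_pow, hccfrob, hwc2,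
            ← Tr_pow_pow i (w⁻¹ * η), mul_pow, inv_pow]
        have key3 : Tr n (ξ ^ 2 ^ i * (w * c ^ 2 ^ (n - i)))
            = Tr n (ξ * ((w ^ 2 ^ i)⁻¹ * η ^ 2 ^ i)) := by
          rw [← Tr_pow_pow i (ξ ^ 2 ^ i * (w * c ^ 2 ^ (n - i))), mul_pow, mul_pow,
            hccfrob, hwc2, ← pow_mul, ← pow_add,
            ← Tr_pow_pow i (ξ ^ 2 ^ (i + i) * (w⁻¹ * η)), mul_pow, mul_pow, inv_pow,
            ← pow_mul, ← pow_add,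
            show ξ ^ 2 ^ (i + i + i) = ξ from by
              rw [show i + i + i = 3 * i from by ring]
              exact fix_pow_mul ξ 3 i hξ8]
        have hμx : μ * x = w * c + w * c ^ 2 ^ (n - i) := by
          rw [← hc1, hwdef]; ring
        have hξμx : ξ ^ 2 ^ i * μ * x
            = ξ ^ 2 ^ i * (w * c) + ξ ^ 2 ^ i * (w * c ^ 2 ^ (n - i)) := by
          rw [← hc1, hwdef]; ring
        have ht1 : t₁ = Tr n ((w ^ 2 ^ i)⁻¹ * η) + Tr n ((w ^ 2 ^ i)⁻¹ * η ^ 2 ^ i) := by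
          rw [ht₁def, hμx, Tr_add, hwc, key2]
        have ht2 : t₂ = Tr n (ξ ^ 2 ^ i * ((w ^ 2 ^ i)⁻¹ * η))
            + Tr n (ξ * ((w ^ 2 ^ i)⁻¹ * η ^ 2 ^ i)) := by
          rw [ht₂def, hξμx, Tr_add, hwc, key3]
        -- now the case analysis
        have htrA : Tr n ((ξ + ξ ^ 2 ^ i) * (w ^ 2 ^ i)⁻¹) = 0 := htr
        rcases zmod2_cases t₁ with h1 | h1 <;> rcases zmod2_cases t₂ with h2 | h2
        · exact hη (by rw [hηdef, h1, h2]; simp)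
        · -- t₁ = 0, t₂ = 1 : η = 1
          have hη1 : η = 1 := by rw [hηdef, h1, h2]; simp
          rw [hη1, one_pow, mul_one] at ht2
          rw [h2] at ht2
          rw [← Tr_add, show ξ ^ 2 ^ i * (w ^ 2 ^ i)⁻¹ + ξ * (w ^ 2 ^ i)⁻¹
            = (ξ + ξ ^ 2 ^ i) * (w ^ 2 ^ i)⁻¹ from by ring, htrA] at ht2
          exact one_ne_zero ht2
        · -- t₁ = 1, t₂ = 0 : η = ξ
          have hη1 : η = ξ := by rw [hηdef, h1, h2]; simp
          rw [hη1] at ht1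
          rw [h1] at ht1
          rw [← Tr_add, show (w ^ 2 ^ i)⁻¹ * ξ + (w ^ 2 ^ i)⁻¹ * ξ ^ 2 ^ i
            = (ξ + ξ ^ 2 ^ i) * (w ^ 2 ^ i)⁻¹ from by ring, htrA] at ht1
          exact one_ne_zero ht1
        · -- t₁ = 1, t₂ = 1 : η = ξ + 1
          have hη1 : η = ξ + 1 := by rw [hηdef, h1, h2]; simp
          have hη2i : η ^ 2 ^ i = ξ ^ 2 ^ i + 1 := by
            rw [hη1, add_pow_char_pow, one_pow]
          rw [hη2i, hη1] at ht1
          rw [h1] at ht1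
          rw [← Tr_add, show (w ^ 2 ^ i)⁻¹ * (ξ + 1) + (w ^ 2 ^ i)⁻¹ * (ξ ^ 2 ^ i + 1)
            = (ξ + ξ ^ 2 ^ i) * (w ^ 2 ^ i)⁻¹
              + ((w ^ 2 ^ i)⁻¹ + (w ^ 2 ^ i)⁻¹) from by ring, add_self_F,
            add_zero, htrA] at ht1
          exact one_ne_zero ht1
      -- conclude p = 0
      have hc0 : c = 0 := by
        have h0 : ν ^ (2 ^ i + 1) * c = 0 := by rw [hc2, hη0, mul_zero]
        exact (mul_eq_zero.mp h0).resolve_left hνm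
      have hx0 : x = 0 := by
        rw [← hc1, hc0, zero_pow (show 2 ^ (n - i) ≠ 0 by positivity), add_zero,
          mul_zero]
      rw [hx0, hη0, mul_zero]
    · rintro rfl
      refine ⟨⟨0, ?_⟩, ⟨0, ?_⟩⟩
      · rw [map_zero]; rfl
      · rw [map_zero]; rfl
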